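/- Let T be an (A,(m,n))-isosymmetric operator with n even and I_A^m(T) ≥ 0. Then T is (A,(m,n−1))-isosymmetric. -/

import Mathlib

open ContinuousLinearMap

noncomputable def SOp {H : Type*} [NormedAddCommGroup H] [InnerProductSpace ℂ H]
    [CompleteSpace H] (A T : H →L[ℂ] H) (n : ℕ) : H →L[ℂ] H :=
  ∑ k ∈ Finset.range (n + 1),
    ((-1 : ℂ) ^ (n - k) * (n.choose k : ℂ)) • (((adjoint T) ^ k) ∘L A ∘L (T ^ (n - k)))

noncomputable def OmegaS {H : Type*} [NormedAddCommGroup H] [InnerProductSpace ℂ H]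
    [CompleteSpace H] (A T : H →L[ℂ] H) (m n : ℕ) : H →L[ℂ] H :=
  ∑ k ∈ Finset.range (m + 1),
    ((-1 : ℂ) ^ (m - k) * (m.choose k : ℂ)) • (((adjoint T) ^ k) ∘L SOp A T n ∘L (T ^ k))

noncomputable def IOp {H : Type*} [NormedAddCommGroup H] [InnerProductSpace ℂ H]
    [CompleteSpace H] (A T : H →L[ℂ] H) (m : ℕ) : H →L[ℂ] H :=
  ∑ j ∈ Finset.range (m + 1),
    ((-1 : ℂ) ^ (m - j) * (m.choose j : ℂ)) • (((adjoint T) ^ j) ∘L A ∘L (T ^ j))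

/-!
Let `D X = T† X - X T`. Then `S_B^h(T) = D^h B` and `Ω_A^{m,h}(T) = S_{I_A^m(T)}^h(T)`. Left and
right multiplications commute, so `exp (z T†) B exp (-z T) = exp (z D) B = ∑ (z^h / h!) D^h B`,
a finite sum once `D^n B = 0`. For `z = i s` the left side is `E† B E` with `E = exp (-i s T)`,
which is positive when `B = I_A^m(T)` is. Hence `s ↦ ⟪x, E† B E x⟫` is a polynomial of degree
`< n` taking values in `[0, ∞)` on all of `ℝ`, so its coefficient of the odd power `s^(n-1)`, a
nonzero multiple of `⟪x, S^(n-1) x⟫`, vanishes.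
-/

open NormedSpace Filter Topology
open scoped ComplexOrder

namespace ContinuousLinearMap

section MulLeftSubMulRight

variable {𝕜 𝔸 : Type*} [RCLike 𝕜] [NormedRing 𝔸] [NormedAlgebra 𝕜 𝔸]

variable (𝕜) in
noncomputable def mulLeftSubMulRight (a b : 𝔸) : 𝔸 →L[𝕜] 𝔸 :=
  mul 𝕜 𝔸 a - (mul 𝕜 𝔸).flip b

lemma commute_mul_flip_mul (a b : 𝔸) : Commute (mul 𝕜 𝔸 a) ((mul 𝕜 𝔸).flip b) := by
  ext x
  simp [mul_assoc]

lemma mul_pow_apply (a x : 𝔸) (k : ℕ) : (mul 𝕜 𝔸 a ^ k) x = a ^ k * x := by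
  induction k with
  | zero => simp
  | succ k ih => rw [pow_succ', mul_apply_eq_comp, ih, mul_apply', pow_succ', mul_assoc]

lemma flip_mul_pow_apply (b x : 𝔸) (k : ℕ) : ((mul 𝕜 𝔸).flip b ^ k) x = x * b ^ k := by
  induction k with
  | zero => simp
  | succ k ih =>
    rw [pow_succ', mul_apply_eq_comp, ih, flip_apply, mul_apply', pow_succ, mul_assoc]

lemma mulLeftSubMulRight_pow_apply (a b x : 𝔸) (n : ℕ) :
    (mulLeftSubMulRight 𝕜 a b ^ n) x = ∑ k ∈ Finset.range (n + 1),
      ((-1 : 𝕜) ^ (n - k) * n.choose k) • (a ^ k * x * b ^ (n - k)) := by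
  rw [mulLeftSubMulRight, sub_eq_add_neg, ← neg_one_smul 𝕜 ((mul 𝕜 𝔸).flip b),
    ((commute_mul_flip_mul a b).smul_right _).add_pow, sum_apply]
  refine Finset.sum_congr rfl fun k _ => ?_
  rw [← nsmul_eq_mul', smul_pow, mul_smul_comm, smul_apply, smul_apply, mul_apply_eq_comp,
    mul_pow_apply, flip_mul_pow_apply, ← Nat.cast_smul_eq_nsmul 𝕜, smul_smul, mul_comm, mul_assoc]

lemma mulLeftSubMulRight_pow_mul_mul {a b a' b' : 𝔸} (ha : Commute a a') (hb : Commute b b')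
    (x : 𝔸) (n : ℕ) :
    (mulLeftSubMulRight 𝕜 a b ^ n) (a' * x * b') = a' * (mulLeftSubMulRight 𝕜 a b ^ n) x * b' := by
  induction n with
  | zero => simp
  | succ n ih =>
    rw [pow_succ', mul_apply_eq_comp, ih, mul_apply_eq_comp]
    simp only [mulLeftSubMulRight, sub_apply, flip_apply, mul_apply', mul_sub, sub_mul]
    simp only [mul_assoc, ha.left_comm, hb.eq]

variable [CompleteSpace 𝔸]

lemma exp_mul_apply (a x : 𝔸) : exp (mul 𝕜 𝔸 a) x = exp a * x := by
  have h := (exp_series_hasSum_exp' (𝕂 := 𝕜) (mul 𝕜 𝔸 a)).mapL (apply 𝕜 𝔸 x)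
  simp only [apply_apply, smul_apply, mul_pow_apply, ← smul_mul_assoc] at h
  exact h.unique ((exp_series_hasSum_exp' a).mul_right x)

lemma exp_flip_mul_apply (b x : 𝔸) : exp ((mul 𝕜 𝔸).flip b) x = x * exp b := by
  have h := (exp_series_hasSum_exp' (𝕂 := 𝕜) ((mul 𝕜 𝔸).flip b)).mapL (apply 𝕜 𝔸 x)
  simp only [apply_apply, smul_apply, flip_mul_pow_apply, ← mul_smul_comm] at h
  exact h.unique ((exp_series_hasSum_exp' b).mul_left x)

lemma hasSum_exp_mul_mul_exp (z : 𝕜) (a b x : 𝔸) :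
    HasSum (fun h => (z ^ h / h.factorial) • (mulLeftSubMulRight 𝕜 a b ^ h) x)
      (exp (z • a) * x * exp (-z • b)) := by
  -- `exp_add_of_commute` is stated for `ℚ`-algebras.
  let _ : NormedAlgebra ℚ (𝔸 →L[𝕜] 𝔸) := .restrictScalars ℚ 𝕜 _
  have hexp : exp (z • mulLeftSubMulRight 𝕜 a b) =
      exp (mul 𝕜 𝔸 (z • a)) * exp ((mul 𝕜 𝔸).flip (-z • b)) := by
    rw [← exp_add_of_commute (commute_mul_flip_mul _ _)]
    simp [mulLeftSubMulRight, sub_eq_add_neg]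
  -- `smul_pow` does not apply: no `IsScalarTower 𝕜 (𝔸 →L[𝕜] 𝔸) (𝔸 →L[𝕜] 𝔸)` instance is found.
  have hpow (h : ℕ) :
      ((z • mulLeftSubMulRight 𝕜 a b) ^ h) x = z ^ h • (mulLeftSubMulRight 𝕜 a b ^ h) x := by
    induction h with
    | zero => simp
    | succ h ih =>
      rw [pow_succ', mul_apply_eq_comp, ih, smul_apply, map_smul, smul_smul, pow_succ',
        pow_succ', mul_apply_eq_comp]
  have h := (exp_series_hasSum_exp' (𝕂 := 𝕜) (z • mulLeftSubMulRight 𝕜 a b)).mapL (apply 𝕜 𝔸 x)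
  rw [apply_apply, hexp, mul_apply_eq_comp, exp_flip_mul_apply, exp_mul_apply, ← mul_assoc] at h
  simpa only [apply_apply, smul_apply, hpow, smul_smul, div_eq_inv_mul, mul_comm] using h

lemma exp_mul_mul_exp_eq_sum {a b x : 𝔸} {n : ℕ} (hx : (mulLeftSubMulRight 𝕜 a b ^ n) x = 0)
    (z : 𝕜) : exp (z • a) * x * exp (-z • b) =
      ∑ h ∈ Finset.range n, (z ^ h / h.factorial) • (mulLeftSubMulRight 𝕜 a b ^ h) x := by
  refine (hasSum_exp_mul_mul_exp z a b x).unique (hasSum_sum_of_ne_finset_zero fun h hh => ?_)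
  rw [← pow_sub_mul_pow (mulLeftSubMulRight 𝕜 a b) (not_lt.mp (Finset.mem_range.not.mp hh)),
    mul_apply_eq_comp, hx, map_zero, smul_zero]

end MulLeftSubMulRight

lemma adjoint_exp {H : Type*} [NormedAddCommGroup H] [InnerProductSpace ℂ H] [CompleteSpace H]
    (T : H →L[ℂ] H) : adjoint (exp T) = exp (adjoint T) := by
  rw [← star_eq_adjoint, star_exp, star_eq_adjoint]

end ContinuousLinearMap

lemma coeff_eq_zero_of_odd_of_nonneg {d : ℕ} (c : ℕ → ℂ) (hd : Odd d)
    (hc : ∀ s : ℝ, 0 ≤ ∑ h ∈ Finset.range (d + 1), c h * (s : ℂ) ^ h) : c d = 0 := by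
  -- With `f s = ∑ c h * s ^ h`, the reversed polynomial `P t = t ^ d * f t⁻¹` is continuous with
  -- `P 0 = c d`, and for `t ≠ 0` it has the sign of `t ^ d`, which changes at `0` as `d` is odd.
  let P (t : ℝ) : ℂ := ∑ h ∈ Finset.range (d + 1), c h * (t : ℂ) ^ (d - h)
  have hP0 : P 0 = c d := by
    simp only [P]
    rw [Finset.sum_eq_single_of_mem d (Finset.self_mem_range_succ d)]
    · simp
    · intro h hh hne
      rw [Finset.mem_range] at hh
      simp [Nat.sub_ne_zero_of_lt (lt_of_le_of_ne (Nat.lt_succ_iff.mp hh) hne)]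
  have hP : Tendsto P (𝓝 0) (𝓝 (c d)) := hP0 ▸ (by fun_prop : Continuous P).tendsto 0
  have hP_eq (t : ℝ) (ht : t ≠ 0) :
      P t = ((t ^ d : ℝ) : ℂ) * ∑ h ∈ Finset.range (d + 1), c h * ((t⁻¹ : ℝ) : ℂ) ^ h := by
    rw [Finset.mul_sum]
    refine Finset.sum_congr rfl fun h hh => ?_
    rw [Finset.mem_range] at hh
    push_cast
    rw [pow_sub₀ _ (by exact_mod_cast ht) (Nat.lt_succ_iff.mp hh), inv_pow]
    ring
  apply le_antisymm
  · refine le_of_tendsto (hP.mono_left (nhdsWithin_le_nhds (s := Set.Iio 0))) ?_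
    filter_upwards [self_mem_nhdsWithin] with t (ht : t < 0)
    rw [hP_eq t ht.ne]
    exact mul_nonpos_of_nonpos_of_nonneg (by exact_mod_cast (hd.pow_neg ht).le) (hc _)
  · refine ge_of_tendsto (hP.mono_left (nhdsWithin_le_nhds (s := Set.Ioi 0))) ?_
    filter_upwards [self_mem_nhdsWithin] with t (ht : 0 < t)
    rw [hP_eq t ht.ne']
    exact mul_nonneg (by exact_mod_cast (pow_pos ht d).le) (hc _)

section Operator

variable {H : Type*} [NormedAddCommGroup H] [InnerProductSpace ℂ H] [CompleteSpace H]

lemma SOp_eq_mulLeftSubMulRight_pow_apply (B T : H →L[ℂ] H) (n : ℕ) :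
    SOp B T n = (mulLeftSubMulRight ℂ (adjoint T) T ^ n) B := by
  rw [mulLeftSubMulRight_pow_apply]
  rfl

lemma OmegaS_eq_SOp_IOp (A T : H →L[ℂ] H) (m n : ℕ) :
    OmegaS A T m n = SOp (IOp A T m) T n := by
  rw [SOp_eq_mulLeftSubMulRight_pow_apply, IOp, map_sum, OmegaS]
  refine Finset.sum_congr rfl fun j _ => ?_
  rw [map_smul, SOp_eq_mulLeftSubMulRight_pow_apply]
  exact congrArg _ (mulLeftSubMulRight_pow_mul_mul ((Commute.refl _).pow_right j)
    ((Commute.refl _).pow_right j) A n).symm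

lemma sum_inner_SOp_mul_pow_nonneg {B : H →L[ℂ] H} (hB : B.IsPositive) (T : H →L[ℂ] H) {n : ℕ}
    (h : SOp B T n = 0) (x : H) (s : ℝ) :
    0 ≤ ∑ k ∈ Finset.range n,
      (Complex.I ^ k / k.factorial * inner ℂ x (SOp B T k x)) * (s : ℂ) ^ k := by
  set z : ℂ := Complex.I * s
  have hE : adjoint (exp (-z • T)) = exp (z • adjoint T) := by
    rw [adjoint_exp, map_smulₛₗ]
    simp [z]
  have hpos := (hB.adjoint_conj (exp (-z • T))).inner_nonneg_right x
  rw [hE, ← mul_def, ← mul_def, ← mul_assoc,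
    exp_mul_mul_exp_eq_sum (by rwa [← SOp_eq_mulLeftSubMulRight_pow_apply]), sum_apply,
    inner_sum] at hpos
  convert hpos using 2 with k
  rw [smul_apply, inner_smul_right, ← SOp_eq_mulLeftSubMulRight_pow_apply]
  ring

lemma SOp_eq_zero_of_odd_of_isPositive {B : H →L[ℂ] H} (hB : B.IsPositive) (T : H →L[ℂ] H)
    {d : ℕ} (hd : Odd d) (h : SOp B T (d + 1) = 0) : SOp B T d = 0 := by
  refine coe_injective ((inner_map_self_eq_zero _).mp fun x => ?_)
  have hc := coeff_eq_zero_of_odd_of_nonneg _ hd (sum_inner_SOp_mul_pow_nonneg hB T h x)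
  rw [coe_coe, inner_eq_zero_symm]
  exact (mul_eq_zero.mp hc).resolve_left
    (div_ne_zero (pow_ne_zero _ Complex.I_ne_zero) (by positivity))

end Operator

theorem isosymmetric_reduce_n_general {H : Type*} [NormedAddCommGroup H] [InnerProductSpace ℂ H]
    [CompleteSpace H] (A T : H →L[ℂ] H) (m n : ℕ)
    (hn_even : Even n) (hI : (IOp A T m).IsPositive)
    (h : OmegaS A T m n = 0) : OmegaS A T m (n - 1) = 0 := by
  obtain rfl | hn := eq_or_ne n 0
  · exact h
  obtain ⟨d, rfl⟩ := Nat.exists_eq_add_one_of_ne_zero hn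
  have hd : Odd d := Nat.not_even_iff_odd.mp (Nat.even_add_one.mp hn_even)
  rw [OmegaS_eq_SOp_IOp] at h ⊢
  exact SOp_eq_zero_of_odd_of_isPositive hI T hd h

theorem isosymmetric_reduce_n {H : Type*} [NormedAddCommGroup H] [InnerProductSpace ℂ H]
    [CompleteSpace H] (A T : H →L[ℂ] H) (hA : A.IsPositive) (m n : ℕ)
    (hn_even : Even n) (hn : 2 ≤ n) (hI : (IOp A T m).IsPositive)
    (h : OmegaS A T m n = 0) : OmegaS A T m (n - 1) = 0 :=
  isosymmetric_reduce_n_general A T m n hn_even hI h
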